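/- Flattening preserves CTL: for every CTL formula Φ and fresh atomic proposition κ not occurring in Φ and not in the Kripke structure's labelling, and for any subformula θ of Φ, the formula Φ is equivalent (at every state of every Kripke structure with total transitions) to ∃κ.( Φ[θ ← κ] ∧ AG(κ ↔ θ) ), where Φ[θ ← κ] replaces every occurrence of θ in Φ by κ. -/
import Mathlib


/-- CTL formulas: atomic propositions (indexed by `ℕ`), negation, disjunction,
`EX`, `E _ U _` and `A _ U _`. -/
inductive CForm : Type
  | atom : ℕ → CForm
  | neg : CForm → CForm
  | orF : CForm → CForm → CForm
  | nxt : CForm → CForm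
  | eu : CForm → CForm → CForm
  | au : CForm → CForm → CForm
deriving DecidableEq

/-- Satisfaction of CTL formulas over a Kripke structure `(V, E, ℓ)`. -/
def CSat {V : Type} (E : V → V → Prop) (ℓ : V → ℕ → Prop) : V → CForm → Prop
  | x, .atom p => ℓ x p
  | x, .neg φ => ¬ CSat E ℓ x φ
  | x, .orF φ ψ => CSat E ℓ x φ ∨ CSat E ℓ x ψ
  | x, .nxt φ => ∃ y, E x y ∧ CSat E ℓ y φ
  | x, .eu φ ψ =>
      ∃ ρ : ℕ → V, (∀ i, E (ρ i) (ρ (i + 1))) ∧ ρ 0 = x ∧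
        ∃ i, CSat E ℓ (ρ i) ψ ∧ ∀ j < i, CSat E ℓ (ρ j) φ
  | x, .au φ ψ =>
      ∀ ρ : ℕ → V, (∀ i, E (ρ i) (ρ (i + 1))) → ρ 0 = x →
        ∃ i, CSat E ℓ (ρ i) ψ ∧ ∀ j < i, CSat E ℓ (ρ j) φ

/-- The atomic proposition `κ` occurs in a formula. -/
def occursIn (κ : ℕ) : CForm → Prop
  | .atom p => p = κ
  | .neg φ => occursIn κ φ
  | .orF φ ψ => occursIn κ φ ∨ occursIn κ ψ
  | .nxt φ => occursIn κ φ
  | .eu φ ψ => occursIn κ φ ∨ occursIn κ ψ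
  | .au φ ψ => occursIn κ φ ∨ occursIn κ ψ

/-- `θ` is a subformula of `Φ`. -/
def Subf (θ : CForm) : CForm → Prop
  | Φ@(.atom _) => θ = Φ
  | Φ@(.neg φ) => θ = Φ ∨ Subf θ φ
  | Φ@(.orF φ ψ) => θ = Φ ∨ Subf θ φ ∨ Subf θ ψ
  | Φ@(.nxt φ) => θ = Φ ∨ Subf θ φ
  | Φ@(.eu φ ψ) => θ = Φ ∨ Subf θ φ ∨ Subf θ ψ
  | Φ@(.au φ ψ) => θ = Φ ∨ Subf θ φ ∨ Subf θ ψ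

/-- `subst θ κ Φ` replaces every occurrence of the subformula `θ` in `Φ` by the
atomic proposition `κ`. -/
def subst (θ : CForm) (κ : ℕ) (Φ : CForm) : CForm :=
  if Φ = θ then .atom κ
  else match Φ with
    | .atom p => .atom p
    | .neg φ => .neg (subst θ κ φ)
    | .orF φ ψ => .orF (subst θ κ φ) (subst θ κ ψ)
    | .nxt φ => .nxt (subst θ κ φ)
    | .eu φ ψ => .eu (subst θ κ φ) (subst θ κ ψ)
    | .au φ ψ => .au (subst θ κ φ) (subst θ κ ψ)

/-- Relabelling of the structure: the labelling of `κ` is replaced by `L`. -/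
def relabel {V : Type} (ℓ : V → ℕ → Prop) (κ : ℕ) (L : V → Prop) : V → ℕ → Prop :=
  fun v q => if q = κ then L v else ℓ v q


theorem sat_relabel {V : Type} (E : V → V → Prop) (ℓ : V → ℕ → Prop) (κ : ℕ) (L : V → Prop) :
    ∀ ψ, ¬ occursIn κ ψ → ∀ y, (CSat E (relabel ℓ κ L) y ψ ↔ CSat E ℓ y ψ) := by
  intro ψ
  induction ψ with
  | atom p =>
    intro h y
    simp only [occursIn] at h
    simp [CSat, relabel, h]
  | neg φ ih =>
    intro h y
    simp only [occursIn] at h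
    simp only [CSat]
    rw [ih h]
  | orF φ ψ ih1 ih2 =>
    intro h y
    simp only [occursIn, not_or] at h
    simp only [CSat]
    rw [ih1 h.1, ih2 h.2]
  | nxt φ ih =>
    intro h y
    simp only [occursIn] at h
    simp only [CSat]
    constructor
    · rintro ⟨z, hz, hs⟩; exact ⟨z, hz, (ih h z).mp hs⟩
    · rintro ⟨z, hz, hs⟩; exact ⟨z, hz, (ih h z).mpr hs⟩
  | eu φ ψ ih1 ih2 =>
    intro h y
    simp only [occursIn, not_or] at h
    simp only [CSat]
    constructor
    · rintro ⟨ρ, hρ, h0, i, hi, hj⟩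
      exact ⟨ρ, hρ, h0, i, (ih2 h.2 _).mp hi, fun j hji => (ih1 h.1 _).mp (hj j hji)⟩
    · rintro ⟨ρ, hρ, h0, i, hi, hj⟩
      exact ⟨ρ, hρ, h0, i, (ih2 h.2 _).mpr hi, fun j hji => (ih1 h.1 _).mpr (hj j hji)⟩
  | au φ ψ ih1 ih2 =>
    intro h y
    simp only [occursIn, not_or] at h
    simp only [CSat]
    constructor
    · intro H ρ hρ h0; obtain ⟨i, hi, hj⟩ := H ρ hρ h0
      exact ⟨i, (ih2 h.2 _).mp hi, fun j hji => (ih1 h.1 _).mp (hj j hji)⟩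
    · intro H ρ hρ h0; obtain ⟨i, hi, hj⟩ := H ρ hρ h0
      exact ⟨i, (ih2 h.2 _).mpr hi, fun j hji => (ih1 h.1 _).mpr (hj j hji)⟩

theorem subf_occurs {κ : ℕ} {θ : CForm} : ∀ Φ, Subf θ Φ → occursIn κ θ → occursIn κ Φ := by
  intro Φ
  induction Φ with
  | atom p => intro h hκ; rw [Subf] at h; rwa [← h]
  | neg φ ih =>
    intro h hκ
    rcases h with h | h
    · rwa [← h]
    · exact ih h hκ
  | orF φ ψ ih1 ih2 =>
    intro h hκ
    rcases h with h | h | h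
    · rwa [← h]
    · exact Or.inl (ih1 h hκ)
    · exact Or.inr (ih2 h hκ)
  | nxt φ ih =>
    intro h hκ
    rcases h with h | h
    · rwa [← h]
    · exact ih h hκ
  | eu φ ψ ih1 ih2 =>
    intro h hκ
    rcases h with h | h | h
    · rwa [← h]
    · exact Or.inl (ih1 h hκ)
    · exact Or.inr (ih2 h hκ)
  | au φ ψ ih1 ih2 =>
    intro h hκ
    rcases h with h | h | h
    · rwa [← h]
    · exact Or.inl (ih1 h hκ)
    · exact Or.inr (ih2 h hκ)

theorem path_reach {V : Type} {E : V → V → Prop} {x y : V}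
    (hxy : Relation.ReflTransGen E x y) (ρ : ℕ → V)
    (hρ : ∀ i, E (ρ i) (ρ (i + 1))) (h0 : ρ 0 = y) :
    ∀ i, Relation.ReflTransGen E x (ρ i) := by
  intro i
  induction i with
  | zero => rwa [h0]
  | succ n ih => exact ih.tail (hρ n)

theorem subst_eq_self {θ : CForm} {κ : ℕ} {ψ : CForm} (h : ψ = θ) :
    subst θ κ ψ = .atom κ := by
  rw [subst.eq_def, if_pos h]

theorem theta_case {V : Type} (E : V → V → Prop) (ℓ : V → ℕ → Prop) (κ : ℕ)
    (θ : CForm) (hθ : ¬ occursIn κ θ) (L : V → Prop) (x : V)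
    (hL : ∀ y, Relation.ReflTransGen E x y → (L y ↔ CSat E (relabel ℓ κ L) y θ))
    {y : V} (hy : Relation.ReflTransGen E x y) {ψ : CForm} (hψ : ψ = θ) :
    CSat E (relabel ℓ κ L) y (subst θ κ ψ) ↔ CSat E ℓ y ψ := by
  subst hψ
  rw [subst_eq_self rfl]
  simp only [CSat, relabel, if_pos rfl]
  rw [hL y hy, sat_relabel E ℓ κ L ψ hθ y]
  simp

theorem key_lemma {V : Type} (E : V → V → Prop) (ℓ : V → ℕ → Prop) (κ : ℕ)
    (θ : CForm) (hθ : ¬ occursIn κ θ) (L : V → Prop) (x : V)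
    (hL : ∀ y, Relation.ReflTransGen E x y → (L y ↔ CSat E (relabel ℓ κ L) y θ)) :
    ∀ ψ, ¬ occursIn κ ψ → ∀ y, Relation.ReflTransGen E x y →
      (CSat E (relabel ℓ κ L) y (subst θ κ ψ) ↔ CSat E ℓ y ψ) := by
  intro ψ
  induction ψ with
  | atom p =>
    intro h y hy
    by_cases hψ : CForm.atom p = θ
    · exact theta_case E ℓ κ θ hθ L x hL hy hψ
    · simp only [occursIn] at h
      rw [subst, if_neg hψ]
      simp [CSat, relabel, h]
  | neg φ ih =>
    intro h y hy
    by_cases hψ : CForm.neg φ = θ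
    · exact theta_case E ℓ κ θ hθ L x hL hy hψ
    · simp only [occursIn] at h
      rw [subst, if_neg hψ]
      simp only [CSat]
      rw [ih h y hy]
  | orF φ ψ ih1 ih2 =>
    intro h y hy
    by_cases hψ : CForm.orF φ ψ = θ
    · exact theta_case E ℓ κ θ hθ L x hL hy hψ
    · simp only [occursIn, not_or] at h
      rw [subst, if_neg hψ]
      simp only [CSat]
      rw [ih1 h.1 y hy, ih2 h.2 y hy]
  | nxt φ ih =>
    intro h y hy
    by_cases hψ : CForm.nxt φ = θ
    · exact theta_case E ℓ κ θ hθ L x hL hy hψ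
    · simp only [occursIn] at h
      rw [subst, if_neg hψ]
      simp only [CSat]
      constructor
      · rintro ⟨z, hz, hs⟩; exact ⟨z, hz, (ih h z (hy.tail hz)).mp hs⟩
      · rintro ⟨z, hz, hs⟩; exact ⟨z, hz, (ih h z (hy.tail hz)).mpr hs⟩
  | eu φ ψ ih1 ih2 =>
    intro h y hy
    by_cases hψ : CForm.eu φ ψ = θ
    · exact theta_case E ℓ κ θ hθ L x hL hy hψ
    · simp only [occursIn, not_or] at h
      rw [subst, if_neg hψ]
      simp only [CSat]
      constructor <;> rintro ⟨ρ, hρ, h0, i, hi, hj⟩ <;>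
        refine ⟨ρ, hρ, h0, i, ?_, fun j hji => ?_⟩
      · exact (ih2 h.2 _ (path_reach hy ρ hρ h0 i)).mp hi
      · exact (ih1 h.1 _ (path_reach hy ρ hρ h0 j)).mp (hj j hji)
      · exact (ih2 h.2 _ (path_reach hy ρ hρ h0 i)).mpr hi
      · exact (ih1 h.1 _ (path_reach hy ρ hρ h0 j)).mpr (hj j hji)
  | au φ ψ ih1 ih2 =>
    intro h y hy
    by_cases hψ : CForm.au φ ψ = θ
    · exact theta_case E ℓ κ θ hθ L x hL hy hψ
    · simp only [occursIn, not_or] at h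
      rw [subst, if_neg hψ]
      simp only [CSat]
      constructor <;> intro H ρ hρ h0 <;> obtain ⟨i, hi, hj⟩ := H ρ hρ h0 <;>
        refine ⟨i, ?_, fun j hji => ?_⟩
      · exact (ih2 h.2 _ (path_reach hy ρ hρ h0 i)).mp hi
      · exact (ih1 h.1 _ (path_reach hy ρ hρ h0 j)).mp (hj j hji)
      · exact (ih2 h.2 _ (path_reach hy ρ hρ h0 i)).mpr hi
      · exact (ih1 h.1 _ (path_reach hy ρ hρ h0 j)).mpr (hj j hji)

/-- Flattening preserves CTL: for a CTL formula `Φ`, a subformula `θ` of `Φ`, and a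
fresh proposition `κ` (not occurring in `Φ` nor in the labelling), `Φ` is equivalent
to `∃κ.( Φ[θ ← κ] ∧ AG(κ ↔ θ) )`, where `AG` ranges over states reachable from `x`. -/
theorem flattening_preserves_ctl {V : Type} [Fintype V] (E : V → V → Prop)
    (hE : ∀ v, ∃ w, E v w) (ℓ : V → ℕ → Prop) (Φ θ : CForm) (κ : ℕ)
    (hfresh : ¬ occursIn κ Φ) (hlab : ∀ v, ¬ ℓ v κ) (hsub : Subf θ Φ) (x : V) :
    CSat E ℓ x Φ ↔
      ∃ L : V → Prop, CSat E (relabel ℓ κ L) x (subst θ κ Φ) ∧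
        ∀ y, Relation.ReflTransGen E x y →
          (L y ↔ CSat E (relabel ℓ κ L) y θ) := by
  have hθ : ¬ occursIn κ θ := fun h => hfresh (subf_occurs Φ hsub h)
  constructor
  · intro hΦ
    refine ⟨fun v => CSat E ℓ v θ, ?_, ?_⟩
    · exact (key_lemma E ℓ κ θ hθ _ x
        (fun y _ => (sat_relabel E ℓ κ _ θ hθ y).symm) Φ hfresh x .refl).mpr hΦ
    · intro y _
      exact (sat_relabel E ℓ κ _ θ hθ y).symm
  · rintro ⟨L, h1, h2⟩
    exact (key_lemma E ℓ κ θ hθ L x h2 Φ hfresh x .refl).mp h1
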